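/- arXiv:1512.01406 — 4 statements merged into one kernel-verified Lean document; each statement's English description precedes it below -/
import Mathlib

section
/- Let f(x) be a monic irreducible polynomial of degree d over F_{p^m}, K = F_{p^m}[x]/⟨f(x)^{p^s}⟩. The number of K-submodules of K² (linear codes over K of length 2) equals Σ_{j=0}^{p^s} (2j+1) p^{m(p^s−j)d}. -/
/-!
Write `R = F[X] ⧸ (f ^ n)`. Every submodule `M` of `R × R` has a unique Hermite normal form: it is
spanned by `(f ^ a, c)` and `(0, f ^ b)`, where `(f ^ a)` is the image of `M` under the first
projection, `(f ^ b)` is its intersection with the second axis, and `c` is reduced modulo `f ^ b`.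
Since `f ^ (n - a) • (f ^ a, c) = (0, f ^ (n - a) * c)` lies in `M`, `f ^ (a + b - n)` divides `c`,
which leaves `q ^ (d * min b (n - a))` choices of `c`, where `q = #F` and `d = deg f`.
After `b ↦ n - b` the exponent is `d * (n - max a b)`, and exactly `2 * j + 1` pairs `(a, b)`
have `max a b = j`.
-/

open Polynomial

theorem Submodule.eq_span_pair_of_map_fst_of_comap_inr {R : Type*} [Ring R]
    {M : Submodule R (R × R)} {x y z : R} (hxy : (x, y) ∈ M)
    (hfst : M.map (LinearMap.fst R R R) = Ideal.span {x})
    (hsnd : M.comap (LinearMap.inr R R R) = Ideal.span {z}) :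
    M = span R {(x, y), (0, z)} := by
  have hz : (0, z) ∈ M := by
    change z ∈ M.comap (LinearMap.inr R R R)
    rw [hsnd]
    exact Ideal.mem_span_singleton_self z
  refine le_antisymm (fun v hv => ?_) (span_le.mpr (by simp [Set.insert_subset_iff, hxy, hz]))
  obtain ⟨r, hr⟩ := Ideal.mem_span_singleton'.mp (hfst ▸ mem_map_of_mem hv :
    v.1 ∈ Ideal.span {x})
  have hrest : v.2 - r * y ∈ Ideal.span {z} := by
    rw [← hsnd, mem_comap]
    convert M.sub_mem hv (M.smul_mem r hxy) using 1
    ext <;> simp [hr]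
  obtain ⟨w, hw⟩ := Ideal.mem_span_singleton'.mp hrest
  rw [mem_span_pair]
  exact ⟨r, w, Prod.ext (by simp [hr]) (by simp [hw])⟩

theorem pow_sub_dvd_of_pow_dvd_pow_mul {A : Type*} [CommMonoidWithZero A] [IsCancelMulZero A]
    {f c : A} (hf : f ≠ 0) {b k : ℕ} (h : f ^ b ∣ f ^ k * c) : f ^ (b - k) ∣ c := by
  rcases le_total b k with hbk | hkb
  · simp [Nat.sub_eq_zero_of_le hbk]
  · rw [← Nat.add_sub_cancel' hkb, pow_add] at h
    simpa using (mul_dvd_mul_iff_left (pow_ne_zero k hf)).mp h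

theorem Finset.sum_range_sum_range_max {M : Type*} [AddCommMonoid M] (g : ℕ → M) (n : ℕ) :
    ∑ a ∈ range n, ∑ b ∈ range n, g (max a b) = ∑ j ∈ range n, (2 * j + 1) • g j := by
  induction n with
  | zero => simp
  | succ n ih =>
    have hrow : ∀ a ∈ range n, g (max a n) = g n := fun a ha => by
      rw [max_eq_right (mem_range.mp ha).le]
    have hcol : ∀ b ∈ range n, g (max n b) = g n := fun b hb => by
      rw [max_eq_left (mem_range.mp hb).le]
    simp only [sum_range_succ, sum_add_distrib, sum_congr rfl hrow, sum_congr rfl hcol, ih,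
      max_self, sum_const, card_range]
    rw [add_smul, two_mul, add_smul, one_smul, add_assoc, add_assoc]

theorem Polynomial.Monic.degree_pow {R : Type*} [Semiring R] [Nontrivial R] {p : R[X]}
    (hp : p.Monic) (n : ℕ) : (p ^ n).degree = ↑(n * p.natDegree) := by
  rw [degree_eq_natDegree (hp.pow n).ne_zero, hp.natDegree_pow]

theorem Polynomial.Monic.degree_mul_lt_iff {R : Type*} [Semiring R] {g e : R[X]} (hg : g.Monic)
    (w : ℕ) : (g * e).degree < ↑(g.natDegree + w) ↔ e.degree < ↑w := by
  rcases eq_or_ne e 0 with rfl | he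
  · simp
  rw [degree_eq_natDegree (hg.mul_right_ne_zero he), degree_eq_natDegree he,
    hg.natDegree_mul' he, Nat.cast_lt, Nat.cast_lt, Nat.add_lt_add_iff_left]

namespace QuotientPowIrreducible

variable {A : Type*} [CommRing A] {f : A} {n : ℕ}

local notation "R" => A ⧸ Ideal.span {f ^ n}
local notation "π" => Ideal.Quotient.mk (Ideal.span {f ^ n})

theorem mk_mem_span_mk_pow_iff {k : ℕ} (hk : k ≤ n) (h : A) :
    π h ∈ Ideal.span {π (f ^ k)} ↔ f ^ k ∣ h := by
  have hmap : (Ideal.span {π (f ^ k)} : Ideal R) = (Ideal.span {f ^ k}).map π := by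
    rw [Ideal.map_span, Set.image_singleton]
  rw [hmap, ← Ideal.mem_comap, Ideal.comap_map_of_surjective' _ Ideal.Quotient.mk_surjective,
    Ideal.mk_ker, sup_eq_left.mpr (Ideal.span_singleton_le_span_singleton.mpr (pow_dvd_pow f hk)),
    Ideal.mem_span_singleton]

theorem pow_sub_dvd_of_mk_pow_mul_eq_zero [IsDomain A] (hf : f ≠ 0) {a : ℕ} {r : A}
    (h : π (f ^ a * r) = 0) : f ^ (n - a) ∣ r :=
  pow_sub_dvd_of_pow_dvd_pow_mul hf ((Ideal.Quotient.eq_zero_iff_dvd _ _).mp h)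

theorem exists_eq_span_mk_pow [IsDomain A] [IsPrincipalIdealRing A] (hf : Irreducible f)
    (I : Ideal R) : ∃ k ≤ n, I = Ideal.span {π (f ^ k)} := by
  obtain ⟨g, hg⟩ := IsPrincipalIdealRing.principal (I.comap π)
  have hgdvd : g ∣ f ^ n := by
    rw [← Ideal.mem_span_singleton, ← Ideal.submodule_span_eq, ← hg, Ideal.mem_comap,
      Ideal.Quotient.mk_singleton_self]
    exact I.zero_mem
  obtain ⟨k, hk, hassoc⟩ := (dvd_prime_pow hf.prime n).mp hgdvd
  refine ⟨k, hk, ?_⟩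
  rw [← Ideal.map_comap_of_surjective π Ideal.Quotient.mk_surjective I, hg,
    Ideal.submodule_span_eq, Ideal.span_singleton_eq_span_singleton.mpr hassoc, Ideal.map_span,
    Set.image_singleton]

theorem eq_of_span_mk_pow_eq [IsDomain A] (hf : Irreducible f) {k k' : ℕ} (hk : k ≤ n)
    (hk' : k' ≤ n) (h : (Ideal.span {π (f ^ k)} : Ideal R) = Ideal.span {π (f ^ k')}) :
    k = k' := by
  have hle : ∀ {i j}, i ≤ n → (Ideal.span {π (f ^ j)} : Ideal R) = Ideal.span {π (f ^ i)} →
      i ≤ j := fun hi hij => (pow_dvd_pow_iff hf.ne_zero hf.not_isUnit).mp <|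
    (mk_mem_span_mk_pow_iff hi _).mp (hij ▸ Ideal.mem_span_singleton_self _)
  exact le_antisymm (hle hk h.symm) (hle hk' h)

def hermiteSpan (f : A) (n a b : ℕ) (c : A) :
    Submodule (A ⧸ Ideal.span {f ^ n}) ((A ⧸ Ideal.span {f ^ n}) × (A ⧸ Ideal.span {f ^ n})) :=
  Submodule.span _ {(Ideal.Quotient.mk _ (f ^ a), Ideal.Quotient.mk _ c),
    (0, Ideal.Quotient.mk _ (f ^ b))}

theorem map_fst_hermiteSpan (a b : ℕ) (c : A) :
    (hermiteSpan f n a b c).map (LinearMap.fst R R R) = Ideal.span {π (f ^ a)} := by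
  rw [hermiteSpan, Submodule.map_span, Set.image_pair, LinearMap.fst_apply, LinearMap.fst_apply,
    Set.pair_comm, Submodule.span_insert_zero]

theorem comap_inr_hermiteSpan [IsDomain A] (hf : f ≠ 0) {a b : ℕ} (ha : a ≤ n) (hb : b ≤ n)
    (c : A) (hc : f ^ (a + b - n) ∣ c) :
    (hermiteSpan f n a b c).comap (LinearMap.inr R R R) = Ideal.span {π (f ^ b)} := by
  refine le_antisymm (fun z hz => ?_) ?_
  · obtain ⟨r, w, hrw⟩ := Submodule.mem_span_pair.mp hz
    obtain ⟨r, rfl⟩ := Ideal.Quotient.mk_surjective r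
    have hr : f ^ (n - a) ∣ r := pow_sub_dvd_of_mk_pow_mul_eq_zero hf (n := n) <| by
      simpa [mul_comm] using congrArg Prod.fst hrw
    have hrc : f ^ b ∣ r * c := (pow_dvd_pow f (show b ≤ (n - a) + (a + b - n) by omega)).trans
      (pow_add f _ _ ▸ mul_dvd_mul hr hc)
    have hz : z = π (r * c) + w * π (f ^ b) := by simpa using (congrArg Prod.snd hrw).symm
    rw [hz]
    exact Ideal.add_mem _ ((mk_mem_span_mk_pow_iff hb _).mpr hrc)
      (Ideal.mul_mem_left _ _ (Ideal.mem_span_singleton_self _))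
  · rw [Ideal.span_le, Set.singleton_subset_iff]
    exact Submodule.subset_span (Set.mem_insert_of_mem _ rfl)

theorem pow_dvd_of_mk_pow_mem [IsDomain A] (hf : f ≠ 0) {M : Submodule R (R × R)} {a b : ℕ}
    (ha : a ≤ n) (hb : b ≤ n)
    (hsnd : M.comap (LinearMap.inr R R R) = Ideal.span {π (f ^ b)}) {c : A}
    (h : (π (f ^ a), π c) ∈ M) : f ^ (a + b - n) ∣ c := by
  have hkill :
      π (f ^ (n - a)) • (π (f ^ a), π c) = LinearMap.inr R R R (π (f ^ (n - a) * c)) := by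
    rw [Prod.smul_mk, smul_eq_mul, ← map_mul, ← pow_add, Nat.sub_add_cancel ha,
      Ideal.Quotient.mk_singleton_self, LinearMap.inr_apply, map_mul, smul_eq_mul]
  have hmem : π (f ^ (n - a) * c) ∈ Ideal.span {π (f ^ b)} := by
    rw [← hsnd, Submodule.mem_comap, ← hkill]
    exact M.smul_mem _ h
  rw [show a + b - n = b - (n - a) by omega]
  exact pow_sub_dvd_of_pow_dvd_pow_mul hf ((mk_mem_span_mk_pow_iff hb _).mp hmem)

theorem eq_and_pow_dvd_sub_of_hermiteSpan_eq [IsDomain A] (hf : Irreducible f) {a b a' b' : ℕ}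
    {c c' : A} (ha : a ≤ n) (hb : b ≤ n) (ha' : a' ≤ n) (hb' : b' ≤ n)
    (hc : f ^ (a + b - n) ∣ c) (hc' : f ^ (a' + b' - n) ∣ c')
    (h : hermiteSpan f n a b c = hermiteSpan f n a' b' c') :
    a = a' ∧ b = b' ∧ f ^ b ∣ c - c' := by
  obtain rfl : a = a' := eq_of_span_mk_pow_eq hf ha ha' <| by
    rw [← map_fst_hermiteSpan a b c, h, map_fst_hermiteSpan]
  have hsnd := comap_inr_hermiteSpan hf.ne_zero ha hb c hc
  obtain rfl : b = b' := eq_of_span_mk_pow_eq hf hb hb' <| by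
    rw [← hsnd, h, comap_inr_hermiteSpan hf.ne_zero ha hb' c' hc']
  have hgen : ∀ {c}, (π (f ^ a), π c) ∈ hermiteSpan f n a b c :=
    Submodule.subset_span (Set.mem_insert _ _)
  have hdiff : LinearMap.inr R R R (π (c - c')) ∈ hermiteSpan f n a b c := by
    have hgen' : (π (f ^ a), π c') ∈ hermiteSpan f n a b c := h ▸ hgen
    convert Submodule.sub_mem _ hgen hgen' using 1
    simp
  refine ⟨rfl, rfl, (mk_mem_span_mk_pow_iff hb _).mp ?_⟩
  rw [← hsnd]
  exact hdiff

end QuotientPowIrreducible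

namespace QuotientPowIrreducible

variable {F : Type*} [Field F] {f : F[X]} {n : ℕ}

local notation "R" => F[X] ⧸ Ideal.span {f ^ n}
local notation "π" => Ideal.Quotient.mk (Ideal.span {f ^ n})

theorem exists_eq_hermiteSpan (hmon : f.Monic) (hf : Irreducible f)
    (M : Submodule R (R × R)) : ∃ a ≤ n, ∃ b ≤ n, ∃ c : F[X],
      (f ^ (a + b - n) ∣ c ∧ c.degree < ↑(b * f.natDegree)) ∧ M = hermiteSpan f n a b c := by
  obtain ⟨a, ha, hfst⟩ := exists_eq_span_mk_pow hf (M.map (LinearMap.fst R R R))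
  obtain ⟨b, hb, hsnd⟩ := exists_eq_span_mk_pow hf (M.comap (LinearMap.inr R R R))
  obtain ⟨⟨x, y⟩, hxy, rfl⟩ := Submodule.mem_map.mp
    (hfst ▸ Ideal.mem_span_singleton_self (π (f ^ a)))
  obtain ⟨c₀, rfl⟩ := Ideal.Quotient.mk_surjective y
  have hinr : LinearMap.inr R R R (π (f ^ b)) ∈ M := by
    rw [← Submodule.mem_comap, hsnd]
    exact Ideal.mem_span_singleton_self _
  have hmem : (π (f ^ a), π (c₀ %ₘ f ^ b)) ∈ M := by
    convert M.sub_mem hxy (M.smul_mem (π (c₀ /ₘ f ^ b)) hinr) using 1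
    ext <;> simp [modByMonic_eq_sub_mul_div, mul_comm]
  refine ⟨a, ha, b, hb, c₀ %ₘ f ^ b, ⟨pow_dvd_of_mk_pow_mem hf.ne_zero ha hb hsnd hmem, ?_⟩,
    Submodule.eq_span_pair_of_map_fst_of_comap_inr hmem hfst hsnd⟩
  rw [← hmon.degree_pow]
  exact degree_modByMonic_lt c₀ (hmon.pow b)

theorem card_dvd_and_degree_lt [Fintype F] (hmon : f.Monic) {t b : ℕ} (htb : t ≤ b) :
    Nat.card {c : F[X] // f ^ t ∣ c ∧ c.degree < ↑(b * f.natDegree)} =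
      Fintype.card F ^ ((b - t) * f.natDegree) := by
  have hdeg (e : F[X]) :
      (f ^ t * e).degree < ↑(b * f.natDegree) ↔ e.degree < ↑((b - t) * f.natDegree) := by
    have hsplit : b * f.natDegree = (f ^ t).natDegree + (b - t) * f.natDegree := by
      rw [hmon.natDegree_pow, ← add_mul, Nat.add_sub_cancel' htb]
    rw [hsplit]
    exact (hmon.pow t).degree_mul_lt_iff _
  let mulPow (e : degreeLT F ((b - t) * f.natDegree)) :
      {c : F[X] // f ^ t ∣ c ∧ c.degree < ↑(b * f.natDegree)} :=
    ⟨f ^ t * e, dvd_mul_right _ _, (hdeg e).mpr (mem_degreeLT.mp e.2)⟩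
  have hbij : Function.Bijective mulPow := by
    refine ⟨fun e e' h => Subtype.ext <|
      mul_left_cancel₀ (pow_ne_zero t hmon.ne_zero) (congrArg Subtype.val h), ?_⟩
    rintro ⟨_, ⟨e, rfl⟩, hc⟩
    exact ⟨⟨e, mem_degreeLT.mpr ((hdeg e).mp hc)⟩, rfl⟩
  rw [← Nat.card_eq_of_bijective mulPow hbij, Nat.card_congr (degreeLTEquiv F _).toEquiv,
    Nat.card_eq_fintype_card, Fintype.card_fun, Fintype.card_fin]

variable (f n) in
def HermiteParams : Type _ :=
  Σ a : Fin (n + 1), Σ b : Fin (n + 1),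
    {c : F[X] // f ^ (a + b - n : ℕ) ∣ c ∧ c.degree < ↑(b * f.natDegree : ℕ)}

theorem bijective_hermiteSpan (hmon : f.Monic) (hf : Irreducible f) :
    Function.Bijective fun x : HermiteParams f n => hermiteSpan f n x.1 x.2.1 x.2.2.1 := by
  refine ⟨?_, fun M => ?_⟩
  · rintro ⟨a, b, c, hc, hcdeg⟩ ⟨a', b', c', hc', hcdeg'⟩ h
    obtain ⟨haa, hbb, hdvd⟩ := eq_and_pow_dvd_sub_of_hermiteSpan_eq hf (Fin.is_le a) (Fin.is_le b)
      (Fin.is_le a') (Fin.is_le b') hc hc' h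
    obtain rfl := Fin.ext haa
    obtain rfl := Fin.ext hbb
    have hdeg : (c - c').degree < (f ^ (b : ℕ)).degree := by
      rw [hmon.degree_pow]
      exact (degree_sub_le c c').trans_lt (max_lt hcdeg hcdeg')
    obtain rfl := sub_eq_zero.mp (eq_zero_of_dvd_of_degree_lt hdvd hdeg)
    rfl
  · obtain ⟨a, ha, b, hb, c, hc, rfl⟩ := exists_eq_hermiteSpan hmon hf M
    exact ⟨⟨⟨a, Nat.lt_succ_of_le ha⟩, ⟨b, Nat.lt_succ_of_le hb⟩, ⟨c, hc⟩⟩, rfl⟩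

theorem card_submodule_prod [Fintype F] (hmon : f.Monic) (hf : Irreducible f) :
    Nat.card (Submodule R (R × R)) =
      ∑ j ∈ Finset.range (n + 1), (2 * j + 1) * Fintype.card F ^ ((n - j) * f.natDegree) := by
  let g (j : ℕ) : ℕ := Fintype.card F ^ ((n - j) * f.natDegree)
  have hcard (a b : Fin (n + 1)) :
      Nat.card {c : F[X] // f ^ (a + b - n : ℕ) ∣ c ∧ c.degree < ↑(b * f.natDegree : ℕ)} =
        g (max a b.rev) := by
    rw [card_dvd_and_degree_lt hmon (by omega), Fin.val_rev]
    congr 2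
    omega
  have _ (a b : Fin (n + 1)) :
      Finite {c : F[X] // f ^ (a + b - n : ℕ) ∣ c ∧ c.degree < ↑(b * f.natDegree : ℕ)} :=
    Nat.finite_of_card_ne_zero (by rw [hcard]; positivity)
  calc Nat.card (Submodule R (R × R))
      = ∑ a : Fin (n + 1), ∑ b : Fin (n + 1), g (max a b.rev) := by
        rw [← Nat.card_eq_of_bijective _ (bijective_hermiteSpan hmon hf), HermiteParams,
          Nat.card_sigma]
        simp_rw [Nat.card_sigma, hcard]
    _ = ∑ a ∈ Finset.range (n + 1), ∑ b ∈ Finset.range (n + 1), g (max a b) := by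
        rw [← Fin.sum_univ_eq_sum_range]
        refine Finset.sum_congr rfl fun a _ => ?_
        rw [← Fin.sum_univ_eq_sum_range (fun b => g (max a b))]
        exact Equiv.sum_comp Fin.revPerm fun b : Fin (n + 1) => g (max a b)
    _ = _ := by simp only [Finset.sum_range_sum_range_max g, smul_eq_mul, g]

end QuotientPowIrreducible

theorem stmt_11_general (p m s : ℕ)
    (F : Type) [Field F] [Fintype F] (hF : Fintype.card F = p ^ m)
    (f : F[X]) (hmon : f.Monic) (hirr : Irreducible f) (d : ℕ) (hd : f.natDegree = d) :
    Nat.card (Submodule (F[X] ⧸ Ideal.span {f ^ p ^ s})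
        ((F[X] ⧸ Ideal.span {f ^ p ^ s}) × (F[X] ⧸ Ideal.span {f ^ p ^ s}))) =
      ∑ j ∈ Finset.range (p ^ s + 1), (2 * j + 1) * p ^ (m * (p ^ s - j) * d) := by
  rw [QuotientPowIrreducible.card_submodule_prod hmon hirr, hF, hd]
  refine Finset.sum_congr rfl fun j _ => ?_
  rw [← pow_mul, mul_assoc, mul_comm (p ^ s - j)]

theorem stmt_11 (p m s : ℕ) (hp : p.Prime) (hm : 0 < m) (hs : 0 < s)
    (F : Type) [Field F] [Fintype F] (hF : Fintype.card F = p ^ m)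
    (f : F[X]) (hmon : f.Monic) (hirr : Irreducible f) (d : ℕ) (hd : f.natDegree = d) :
    Nat.card (Submodule (F[X] ⧸ Ideal.span {f ^ p ^ s})
        ((F[X] ⧸ Ideal.span {f ^ p ^ s}) × (F[X] ⧸ Ideal.span {f ^ p ^ s}))) =
      ∑ j ∈ Finset.range (p ^ s + 1), (2 * j + 1) * p ^ (m * (p ^ s - j) * d) :=
  stmt_11_general p m s F hF f hmon hirr d hd
end

section
/- Let f(x) be a monic irreducible polynomial of degree d over F_{p^m} and K = F_{p^m}[x]/⟨f(x)^{p^s}⟩. Let b ∈ K/⟨f(x)^{p^s−1}⟩ (viewed in K). The K-submodule S of K² generated by (f(x)·b, 1) satisfies the closure condition ((a₀,a₁) ∈ S ⟹ (0,a₀) ∈ S) if and only if f(x)² b² = 0 in K, i.e., if and only if b ∈ f(x)^{⌈p^s/2⌉−1} K. -/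
/-!
Applying the closure condition to the generator `(x, 1)` forces `(0, x) = x • (x, 1)`, i.e.
`x ^ 2 = 0`, and conversely. For `x = f b` with `b = c mod f ^ n`, this says
`n ≤ 2 + 2 v_f(c)`, i.e. `v_f(c) ≥ (n + 1) / 2 - 1`.
-/

open Polynomial

set_option synthInstance.maxHeartbeats 1000000

theorem forall_zero_fst_mem_span_singleton_iff {R : Type*} [CommSemiring R] (x : R) :
    (∀ a ∈ Submodule.span R {(x, (1 : R))}, ((0 : R), a.1) ∈ Submodule.span R {(x, (1 : R))}) ↔
      x ^ 2 = 0 := by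
  simp only [Submodule.mem_span_singleton, forall_exists_index, forall_apply_eq_imp_iff,
    Prod.smul_mk, smul_eq_mul, mul_one, Prod.mk.injEq]
  constructor
  · intro h
    obtain ⟨r, hr0, rfl⟩ := h 1
    simpa [sq] using hr0
  · intro hx r
    exact ⟨r * x, by rw [mul_assoc, ← sq, hx, mul_zero], rfl⟩

theorem Prime.pow_dvd_sq_mul_sq_iff {α : Type*} [CommMonoidWithZero α] [IsCancelMulZero α] {π : α}
    (hπ : Prime π) (n : ℕ) (c : α) :
    π ^ n ∣ π ^ 2 * c ^ 2 ↔ π ^ ((n + 1) / 2 - 1) ∣ c := by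
  rw [pow_dvd_iff_le_emultiplicity, pow_dvd_iff_le_emultiplicity, emultiplicity_mul hπ,
    emultiplicity_pow_self_of_prime hπ, emultiplicity_pow hπ]
  induction emultiplicity π c using ENat.recTopCoe with
  | top => simp
  | coe e => norm_cast; omega

theorem Ideal.Quotient.mk_mem_span_singleton_mk_iff {R : Type*} [CommRing R] {q a : R}
    (haq : a ∣ q) (c : R) :
    Ideal.Quotient.mk (Ideal.span {q}) c ∈ Ideal.span {Ideal.Quotient.mk (Ideal.span {q}) a} ↔
      a ∣ c := by
  rw [← Set.image_singleton, ← Ideal.map_span, Ideal.mem_quotient_iff_mem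
    (Ideal.span_singleton_le_span_singleton.mpr haq), Ideal.mem_span_singleton]

theorem stmt_12_general (p s : ℕ)
    (F : Type) [Field F]
    (f : F[X]) (hirr : Irreducible f)
    (b : F[X] ⧸ Ideal.span {f ^ p ^ s}) :
    ((∀ a ∈ Submodule.span (F[X] ⧸ Ideal.span {f ^ p ^ s})
          {((Ideal.Quotient.mk (Ideal.span {f ^ p ^ s}) f) * b,
            (1 : F[X] ⧸ Ideal.span {f ^ p ^ s}))},
        ((0 : F[X] ⧸ Ideal.span {f ^ p ^ s}), a.1) ∈
          Submodule.span (F[X] ⧸ Ideal.span {f ^ p ^ s})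
            {((Ideal.Quotient.mk (Ideal.span {f ^ p ^ s}) f) * b,
              (1 : F[X] ⧸ Ideal.span {f ^ p ^ s}))}) ↔
      (Ideal.Quotient.mk (Ideal.span {f ^ p ^ s}) f) ^ 2 * b ^ 2 = 0) ∧
    ((Ideal.Quotient.mk (Ideal.span {f ^ p ^ s}) f) ^ 2 * b ^ 2 = 0 ↔
      b ∈ Ideal.span
        {(Ideal.Quotient.mk (Ideal.span {f ^ p ^ s}) f) ^ ((p ^ s + 1) / 2 - 1)}) := by
  refine ⟨by rw [forall_zero_fst_mem_span_singleton_iff, mul_pow], ?_⟩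
  obtain ⟨c, rfl⟩ := Ideal.Quotient.mk_surjective b
  rw [← map_pow, ← map_pow, ← map_mul, Ideal.Quotient.eq_zero_iff_dvd, ← map_pow,
    Ideal.Quotient.mk_mem_span_singleton_mk_iff (pow_dvd_pow f (by omega))]
  exact Prime.pow_dvd_sq_mul_sq_iff hirr.prime _ c

theorem stmt_12 (p m s : ℕ) (hp : p.Prime) (hm : 0 < m) (hs : 0 < s)
    (F : Type) [Field F] [Fintype F] (hF : Fintype.card F = p ^ m)
    (f : F[X]) (hmon : f.Monic) (hirr : Irreducible f) (d : ℕ) (hd : f.natDegree = d)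
    (b : F[X] ⧸ Ideal.span {f ^ p ^ s}) :
    ((∀ a ∈ Submodule.span (F[X] ⧸ Ideal.span {f ^ p ^ s})
          {((Ideal.Quotient.mk (Ideal.span {f ^ p ^ s}) f) * b,
            (1 : F[X] ⧸ Ideal.span {f ^ p ^ s}))},
        ((0 : F[X] ⧸ Ideal.span {f ^ p ^ s}), a.1) ∈
          Submodule.span (F[X] ⧸ Ideal.span {f ^ p ^ s})
            {((Ideal.Quotient.mk (Ideal.span {f ^ p ^ s}) f) * b,
              (1 : F[X] ⧸ Ideal.span {f ^ p ^ s}))}) ↔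
      (Ideal.Quotient.mk (Ideal.span {f ^ p ^ s}) f) ^ 2 * b ^ 2 = 0) ∧
    ((Ideal.Quotient.mk (Ideal.span {f ^ p ^ s}) f) ^ 2 * b ^ 2 = 0 ↔
      b ∈ Ideal.span
        {(Ideal.Quotient.mk (Ideal.span {f ^ p ^ s}) f) ^ ((p ^ s + 1) / 2 - 1)}) :=
  stmt_12_general p s F f hirr b
end

section
/- Let f(x) be a monic irreducible polynomial of degree d over F_{p^m}, K = F_{p^m}[x]/⟨f(x)^{p^s}⟩, and 1 ≤ k ≤ p^s − 1. For b(x) ∈ f(x)^{⌈(p^s−k)/2⌉−1}(K/⟨f(x)^{p^s−k−1}⟩), the ideal C = ⟨f(x)^{k+1} b(x) + u f(x)^k⟩ of K + uK (u² = 0) has exactly p^{md(p^s−k)} elements. -/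
open Polynomial

set_option synthInstance.maxHeartbeats 1000000

/-- The finite chain ring `K = F[x]/⟨f^{p^s}⟩`. -/
abbrev Kq (F : Type) [Field F] (g : F[X]) : Type := F[X] ⧸ Ideal.span {g}

noncomputable instance (F : Type) [Field F] (g : F[X]) : CommRing (Kq F g) :=
  Ideal.Quotient.commRing _

/-- The ring `K + uK = K[u]/⟨u²⟩`. -/
abbrev Kqu (F : Type) [Field F] (g : F[X]) : Type :=
  Polynomial (Kq F g) ⧸ Ideal.span {(X : Polynomial (Kq F g)) ^ 2}

/-! Write `t` for the class of `f` in `K` and `u` for the class of `X`, so that the generator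
is `c (e + u)` with `c = t^k` and `e = t b`. The bound on the `t`-adic valuation of `b` gives
`c e² = 0`, and then `(α + βu) c (e + u) = y (e + u)` with `y = (α + βe) c`. Hence the ideal is
the injective image of `cK` under `y ↦ y (e + u)`, and `cK = f^k F[x] / f^{p^s} F[x]` is
isomorphic, as an `F`-vector space, to `F[x] / f^{p^s-k}`, which has `|F|^{d (p^s - k)}`
elements. -/

section DualNumbers

variable {R : Type*} [CommRing R]

theorem mk_X_sq_eq_zero : Ideal.Quotient.mk (Ideal.span {(X : R[X]) ^ 2}) X ^ 2 = 0 := by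
  rw [← map_pow, Ideal.Quotient.eq_zero_iff_mem]
  exact Ideal.mem_span_singleton_self _

theorem mk_C_add_X_mul_C_eq_zero_iff (a b : R) :
    Ideal.Quotient.mk (Ideal.span {(X : R[X]) ^ 2}) (C a + X * C b) = 0 ↔ a = 0 ∧ b = 0 := by
  rw [Ideal.Quotient.eq_zero_iff_mem, Ideal.mem_span_singleton, X_pow_dvd_iff]
  constructor
  · intro h
    simpa using And.intro (h 0 two_pos) (h 1 one_lt_two)
  · rintro ⟨rfl, rfl⟩ d -
    simp

theorem exists_mk_C_add_X_mul_C (z : R[X] ⧸ Ideal.span {(X : R[X]) ^ 2}) :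
    ∃ a b : R, z = Ideal.Quotient.mk _ (C a + X * C b) := by
  obtain ⟨q, rfl⟩ := Ideal.Quotient.mk_surjective z
  refine ⟨q.coeff 0, q.coeff 1, Ideal.Quotient.eq.2 ?_⟩
  rw [Ideal.mem_span_singleton, X_pow_dvd_iff]
  intro d hd
  interval_cases d <;> simp

theorem card_span_mk_C_mul_add_X_mul_C {c e : R} (he : c * e ^ 2 = 0) :
    Nat.card (Ideal.span
        {Ideal.Quotient.mk (Ideal.span {(X : R[X]) ^ 2}) (C (c * e) + X * C c)}) =
      Nat.card (Ideal.span {c}) := by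
  set mk := Ideal.Quotient.mk (Ideal.span {(X : R[X]) ^ 2})
  set φ : R → R[X] ⧸ Ideal.span {(X : R[X]) ^ 2} := fun y => mk (C (y * e) + X * C y)
  have hφ : Function.Injective φ := by
    intro y y' h
    have : mk (C ((y - y') * e) + X * C (y - y')) = 0 := by
      simp only [φ, map_add, map_sub, map_mul] at h ⊢
      linear_combination h
    exact sub_eq_zero.1 ((mk_C_add_X_mul_C_eq_zero_iff _ _).1 this).2
  have he' : mk (C c) * mk (C e) ^ 2 = 0 := by
    rw [← map_pow, ← map_mul, ← map_pow, ← map_mul, he, map_zero, map_zero]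
  have himage : (Ideal.span {mk (C (c * e) + X * C c)} : Set (R[X] ⧸ _)) =
      φ '' Ideal.span {c} := by
    ext z
    simp only [SetLike.mem_coe, Set.mem_image, Ideal.mem_span_singleton']
    constructor
    · rintro ⟨r, rfl⟩
      obtain ⟨α, β, rfl⟩ := exists_mk_C_add_X_mul_C r
      refine ⟨(α + β * e) * c, ⟨α + β * e, rfl⟩, ?_⟩
      simp only [φ, map_mul, map_add]
      linear_combination mk (C β) * he' - mk (C β) * mk (C c) * mk_X_sq_eq_zero (R := R)
    · rintro ⟨_, ⟨x, rfl⟩, rfl⟩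
      exact ⟨mk (C x), by simp only [φ, map_mul, map_add]; ring⟩
  calc _ = Nat.card (φ '' Ideal.span {c}) := by rw [← himage]; rfl
    _ = _ := Nat.card_image_of_injective hφ _

end DualNumbers

section QuotientCard

variable {F : Type*} [Field F] [Fintype F]

theorem card_quotient_span_singleton {h : F[X]} (hh : h ≠ 0) :
    Nat.card (F[X] ⧸ Ideal.span {h}) = Fintype.card F ^ h.natDegree := by
  change Nat.card (AdjoinRoot h) = _
  rw [Nat.card_congr (AdjoinRoot.powerBasis hh).basis.equivFun.toEquiv, Nat.card_fun]
  simp [Nat.card_eq_fintype_card, AdjoinRoot.powerBasis_dim]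

theorem card_span_mk_of_mul_eq {g h n : F[X]} (hgh : g * h = n) (hn : n ≠ 0) :
    Nat.card (Ideal.span {Ideal.Quotient.mk (Ideal.span {n}) g}) =
      Fintype.card F ^ h.natDegree := by
  have hg : g ≠ 0 := left_ne_zero_of_mul (hgh ▸ hn)
  have hh : h ≠ 0 := right_ne_zero_of_mul (hgh ▸ hn)
  let ψ : F[X] →ₗ[F] F[X] ⧸ Ideal.span {n} :=
    (Ideal.Quotient.mkₐ F _).toLinearMap ∘ₗ LinearMap.mulLeft F g
  have hker : LinearMap.ker ψ = (Ideal.span {h}).restrictScalars F := by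
    ext q
    simp only [ψ, LinearMap.mem_ker, LinearMap.coe_comp, Function.comp_apply,
      LinearMap.mulLeft_apply, AlgHom.toLinearMap_apply, Ideal.Quotient.mkₐ_eq_mk,
      Ideal.Quotient.eq_zero_iff_mem, Ideal.mem_span_singleton, ← hgh, mul_dvd_mul_iff_left hg,
      Submodule.restrictScalars_mem]
  have hrange : (LinearMap.range ψ : Set (F[X] ⧸ Ideal.span {n})) =
      Ideal.span {Ideal.Quotient.mk (Ideal.span {n}) g} := by
    ext z
    obtain ⟨z, rfl⟩ := Ideal.Quotient.mk_surjective z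
    simp only [SetLike.mem_coe, LinearMap.mem_range, Ideal.mem_span_singleton']
    constructor
    · rintro ⟨q, hq⟩
      exact ⟨Ideal.Quotient.mk _ q, by rw [← hq, ← map_mul, mul_comm]; rfl⟩
    · rintro ⟨r, hr⟩
      obtain ⟨q, rfl⟩ := Ideal.Quotient.mk_surjective r
      exact ⟨q, by rw [← hr, ← map_mul, mul_comm]; rfl⟩
  calc _ = Nat.card (LinearMap.range ψ) := Nat.card_congr (Equiv.setCongr hrange.symm)
    _ = Nat.card (F[X] ⧸ LinearMap.ker ψ) :=
      (Nat.card_congr (LinearMap.quotKerEquivRange ψ).toEquiv).symm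
    _ = Nat.card (F[X] ⧸ Ideal.span {h}) := by
      rw [hker]
      exact Nat.card_congr (Submodule.Quotient.restrictScalarsEquiv F _).toEquiv
    _ = _ := card_quotient_span_singleton hh

end QuotientCard

theorem stmt_14_general (p m s : ℕ)
    (F : Type) [Field F] [Fintype F] (hF : Fintype.card F = p ^ m)
    (f : F[X]) (hmon : f.Monic) (d : ℕ) (hd : f.natDegree = d)
    (k : ℕ) (hk2 : k ≤ p ^ s - 1)
    (b : Kq F (f ^ p ^ s))
    (hb : b ∈ Ideal.span
      {(Ideal.Quotient.mk (Ideal.span {f ^ p ^ s}) f) ^ ((p ^ s - k + 1) / 2 - 1)}) :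
    Nat.card ↥(Ideal.span ({Ideal.Quotient.mk
        (Ideal.span {(X : Polynomial (Kq F (f ^ p ^ s))) ^ 2})
        (C ((Ideal.Quotient.mk (Ideal.span {f ^ p ^ s}) f) ^ (k + 1) * b) +
          X * C ((Ideal.Quotient.mk (Ideal.span {f ^ p ^ s}) f) ^ k))} :
        Set (Kqu F (f ^ p ^ s)))) =
      p ^ (m * d * (p ^ s - k)) := by
  set t := Ideal.Quotient.mk (Ideal.span {f ^ p ^ s}) f
  set L := (p ^ s - k + 1) / 2 - 1
  obtain ⟨c, rfl⟩ := Ideal.mem_span_singleton'.mp hb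
  have ht : t ^ (k + 2 + 2 * L) = 0 := by
    rw [← map_pow, Ideal.Quotient.eq_zero_iff_mem, Ideal.mem_span_singleton]
    exact pow_dvd_pow f (by omega)
  have hsq : t ^ k * (t * (c * t ^ L)) ^ 2 = 0 := by
    linear_combination c ^ 2 * ht
  have hfactor : f ^ k * f ^ (p ^ s - k) = f ^ p ^ s := by
    rw [← pow_add]
    congr 1
    omega
  rw [show t ^ (k + 1) * (c * t ^ L) = t ^ k * (t * (c * t ^ L)) by ring,
    card_span_mk_C_mul_add_X_mul_C hsq, ← map_pow,
    card_span_mk_of_mul_eq hfactor (pow_ne_zero _ hmon.ne_zero), natDegree_pow, hd, hF,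
    ← pow_mul]
  ring

theorem stmt_14 (p m s : ℕ) (hp : p.Prime) (hm : 0 < m) (hs : 0 < s)
    (F : Type) [Field F] [Fintype F] (hF : Fintype.card F = p ^ m)
    (f : F[X]) (hmon : f.Monic) (hirr : Irreducible f) (d : ℕ) (hd : f.natDegree = d)
    (k : ℕ) (hk1 : 1 ≤ k) (hk2 : k ≤ p ^ s - 1)
    (b : Kq F (f ^ p ^ s))
    (hb : b ∈ Ideal.span
      {(Ideal.Quotient.mk (Ideal.span {f ^ p ^ s}) f) ^ ((p ^ s - k + 1) / 2 - 1)}) :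
    Nat.card ↥(Ideal.span ({Ideal.Quotient.mk
        (Ideal.span {(X : Polynomial (Kq F (f ^ p ^ s))) ^ 2})
        (C ((Ideal.Quotient.mk (Ideal.span {f ^ p ^ s}) f) ^ (k + 1) * b) +
          X * C ((Ideal.Quotient.mk (Ideal.span {f ^ p ^ s}) f) ^ k))} :
        Set (Kqu F (f ^ p ^ s)))) =
      p ^ (m * d * (p ^ s - k)) :=
  stmt_14_general p m s F hF f hmon d hd k hk2 b hb
end

section
/- Let R be a finite commutative ring, λ ∈ R^×, N a positive integer. Let a = (a₀,...,a_{N−1}), b = (b₀,...,b_{N−1}) ∈ R^N and identify a with a(x) ∈ R[x]/⟨x^N − λ⟩ and b with b(x) ∈ R[x]/⟨x^N − λ^{−1}⟩. If a(x^{−1})·b(x) = 0 in R[x]/⟨x^N − λ^{−1}⟩ (where x^{−1} = λ x^{N−1}), then the Euclidean inner product Σ_{i=0}^{N−1} a_i b_i equals 0. -/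
open Polynomial

/-- The linear functional on `R[X]` extracting the "constant coordinate"
modulo `X^N - C c`: it sends `X^k` to `c^(k/N)` if `N ∣ k` and to `0` otherwise. -/
noncomputable def Tmap (R : Type) [CommRing R] (c : R) (N : ℕ) : R[X] →+ R where
  toFun p := p.sum fun k r => r * (if N ∣ k then c ^ (k / N) else 0)
  map_zero' := Polynomial.sum_zero_index _
  map_add' p q := Polynomial.sum_add_index p q
    (fun k r => r * (if N ∣ k then c ^ (k / N) else 0)) (fun k => zero_mul _)
    (fun k r₁ r₂ => add_mul _ _ _)

theorem Tmap_C_mul_X_pow (R : Type) [CommRing R] (c : R) (N : ℕ) (r : R) (k : ℕ) :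
    Tmap R c N (C r * X ^ k) = r * (if N ∣ k then c ^ (k / N) else 0) := by
  rw [C_mul_X_pow_eq_monomial]
  exact Polynomial.sum_monomial_index r (fun k r => r * (if N ∣ k then c ^ (k / N) else 0)) (zero_mul _)

theorem Tmap_mul_eq_zero (R : Type) [CommRing R] (c : R) (N : ℕ) (hN : 0 < N) (q : R[X]) :
    Tmap R c N ((X ^ N - C c) * q) = 0 := by
  induction q using Polynomial.induction_on' with
  | add p q hp hq => rw [mul_add, map_add, hp, hq, add_zero]
  | monomial k r =>
    have e : (X ^ N - C c) * monomial k r = C r * X ^ (N + k) - C (c * r) * X ^ k := by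
      rw [← C_mul_X_pow_eq_monomial]
      simp only [C_mul, pow_add]
      ring
    rw [e, map_sub, Tmap_C_mul_X_pow, Tmap_C_mul_X_pow]
    by_cases hd : N ∣ k
    · have h1 : N ∣ N + k := Dvd.dvd.add (dvd_refl N) hd
      have h2 : (N + k) / N = k / N + 1 := by
        rw [Nat.add_comm, Nat.add_div_right _ hN]
      simp only [hd, h1, if_pos, h2, pow_succ]
      ring
    · have h1 : ¬ N ∣ N + k := by
        intro hcon
        exact hd ((Nat.dvd_add_right (dvd_refl N)).mp hcon)
      simp [hd, h1]

theorem stmt_18 (R : Type) [CommRing R] [Fintype R] (lam : Rˣ) (N : ℕ) (hN : 0 < N)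
    (a b : Fin N → R)
    (h : Ideal.Quotient.mk (Ideal.span {(X : R[X]) ^ N - C ((lam⁻¹ : Rˣ) : R)})
          (∑ i : Fin N, C (a i) * (C (lam : R) * X ^ (N - 1)) ^ (i : ℕ)) *
        Ideal.Quotient.mk (Ideal.span {(X : R[X]) ^ N - C ((lam⁻¹ : Rˣ) : R)})
          (∑ i : Fin N, C (b i) * X ^ (i : ℕ)) = 0) :
    ∑ i : Fin N, a i * b i = 0 := by
  haveI : NeZero N := ⟨hN.ne'⟩
  set c : R := ((lam⁻¹ : Rˣ) : R) with hc
  -- divisibility from h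
  rw [← map_mul, Ideal.Quotient.eq_zero_iff_mem, Ideal.mem_span_singleton] at h
  obtain ⟨q, hq⟩ := h
  have hT0 : Tmap R c N ((∑ i : Fin N, C (a i) * (C (lam : R) * X ^ (N - 1)) ^ (i : ℕ)) *
      (∑ i : Fin N, C (b i) * X ^ (i : ℕ))) = 0 := by
    rw [hq, Tmap_mul_eq_zero R c N hN]
  -- expand the product
  rw [Finset.sum_mul_sum] at hT0
  have expand : ∀ i j : Fin N,
      (C (a i) * (C (lam : R) * X ^ (N - 1)) ^ (i : ℕ)) * (C (b j) * X ^ (j : ℕ))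
        = C (a i * (lam : R) ^ (i : ℕ) * b j) * X ^ ((N - 1) * (i : ℕ) + (j : ℕ)) := by
    intro i j
    simp only [mul_pow, ← C_pow, C_mul, pow_add, ← pow_mul]
    ring_nf
  simp only [expand, map_sum, Tmap_C_mul_X_pow] at hT0
  have hmul : ∀ m : ℕ, (N - 1) * m + m = N * m := by
    intro m
    have h1 : (N - 1) * m = N * m - m := by rw [Nat.sub_mul, one_mul]
    rw [h1, Nat.sub_add_cancel (Nat.le_mul_of_pos_left m hN)]
  -- identify which exponents are divisible by N
  have key : ∀ i j : Fin N, (N ∣ (N - 1) * (i : ℕ) + (j : ℕ)) ↔ j = i := by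
    intro i j
    constructor
    · intro hd
      have h0 : (((N - 1) * (i : ℕ) + (j : ℕ) : ℕ) : ZMod N) = 0 :=
        (ZMod.natCast_eq_zero_iff _ _).mpr hd
      have hN1 : ((N - 1 : ℕ) : ZMod N) = -1 := by
        have : ((N - 1 : ℕ) : ZMod N) = (N : ZMod N) - 1 := by
          push_cast [Nat.cast_sub hN]
          ring
        rw [this, ZMod.natCast_self, zero_sub]
      rw [Nat.cast_add, Nat.cast_mul, hN1] at h0
      have hij : ((j : ℕ) : ZMod N) = ((i : ℕ) : ZMod N) := by linear_combination h0
      have := congrArg ZMod.val hij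
      rwa [ZMod.val_cast_of_lt j.isLt, ZMod.val_cast_of_lt i.isLt, ← Fin.ext_iff] at this
    · rintro rfl
      exact ⟨(j : ℕ), hmul (j : ℕ)⟩
  have keydiv : ∀ i : Fin N, ((N - 1) * (i : ℕ) + (i : ℕ)) / N = (i : ℕ) := by
    intro i
    rw [hmul (i : ℕ), Nat.mul_div_cancel_left _ hN]
  -- compute the double sum
  have hdiag : ∀ i : Fin N,
      (∑ j : Fin N, a i * (lam : R) ^ (i : ℕ) * b j *
        (if N ∣ (N - 1) * (i : ℕ) + (j : ℕ) then c ^ (((N - 1) * (i : ℕ) + (j : ℕ)) / N) else 0))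
      = a i * b i := by
    intro i
    rw [Finset.sum_eq_single i]
    · rw [if_pos ((key i i).mpr rfl), keydiv i]
      have : (lam : R) ^ (i : ℕ) * c ^ (i : ℕ) = 1 := by
        rw [← mul_pow, hc, Units.mul_inv, one_pow]
      calc a i * (lam : R) ^ (i : ℕ) * b i * c ^ (i : ℕ)
          = a i * b i * ((lam : R) ^ (i : ℕ) * c ^ (i : ℕ)) := by ring
        _ = a i * b i := by rw [this, mul_one]
    · intro j _ hji
      rw [if_neg (fun hd => hji ((key i j).mp hd)), mul_zero]
    · intro hi
      exact absurd (Finset.mem_univ i) hi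
  rw [Finset.sum_congr rfl (fun i _ => hdiag i)] at hT0
  exact hT0
end
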